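/- The quadratic growth bound |S_φ(ψ)| ≤ c₇|ψ|² holds for all φ, ψ ∈ ℝ², where S_φ(ψ) = T(φ+ψ) − T(φ) − DT(φ)ψ and c₇ is a constant with 4|ν̂'(s)| + |ν̂''(s)|s ≤ c₇ for all s ≥ 0. -/

import Mathlib

noncomputable section

/-- `T(W) = ν̂(|W|)W` on `ℝ²`. -/
def Tmap (ν : ℝ → ℝ) (W : EuclideanSpace ℝ (Fin 2)) : EuclideanSpace ℝ (Fin 2) :=
  ν ‖W‖ • W

/-- `S_φ(ψ) = T(φ+ψ) − T(φ) − DT(φ)ψ`. -/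
def Smap (ν : ℝ → ℝ) (φ ψ : EuclideanSpace ℝ (Fin 2)) : EuclideanSpace ℝ (Fin 2) :=
  Tmap ν (φ + ψ) - Tmap ν φ - fderiv ℝ (Tmap ν) φ ψ

/-! The Jacobian `DT` is continuous everywhere, and on the line `t ↦ φ + tψ` away from the
origin the derivative of `t ↦ DT(φ + tψ)ψ` is `D²T(x)[ψ, ψ]`, whose norm is at most
`(4|ν̂'(|x|)| + |ν̂''(|x|)| |x|) |ψ|² ≤ c₇|ψ|²`. The line meets the origin at most once, where
`T` may fail to be twice differentiable, but continuity carries the bound across that point, so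
`t ↦ DT(φ + tψ)ψ` is `c₇|ψ|²`-Lipschitz. The first-order Taylor remainder `S_φ(ψ)` of
`t ↦ T(φ + tψ)` on `[0, 1]` is then at most `c₇|ψ|²/2`. -/

open Set Filter Topology Asymptotics
open scoped RealInnerProductSpace

section RealLine

variable {F : Type*} [NormedAddCommGroup F] [NormedSpace ℝ F] {f f' : ℝ → F} {C : ℝ}

theorem hasDerivAt_add_smul (φ ψ : F) (t : ℝ) : HasDerivAt (fun s : ℝ => φ + s • ψ) ψ t := by
  simpa using ((hasDerivAt_id t).smul_const ψ).const_add φ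

theorem Convex.norm_image_sub_le_of_norm_hasDerivAt_le_closure {U : Set ℝ} (hU : Convex ℝ U)
    (hf : Continuous f) (hd : ∀ t ∈ U, HasDerivAt f (f' t) t) (hb : ∀ t ∈ U, ‖f' t‖ ≤ C)
    {s t : ℝ} (hs : s ∈ closure U) (ht : t ∈ closure U) : ‖f t - f s‖ ≤ C * |t - s| := by
  have hclosed : IsClosed {p : ℝ × ℝ | ‖f p.2 - f p.1‖ ≤ C * |p.2 - p.1|} :=
    isClosed_le (by fun_prop) (by fun_prop)
  have hsub : U ×ˢ U ⊆ {p : ℝ × ℝ | ‖f p.2 - f p.1‖ ≤ C * |p.2 - p.1|} := fun p hp =>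
    hU.norm_image_sub_le_of_norm_hasDerivWithin_le (fun x hx => (hd x hx).hasDerivWithinAt) hb
      hp.1 hp.2
  have := hclosed.closure_subset_iff.2 hsub
  rw [closure_prod_eq] at this
  exact this (show (s, t) ∈ closure U ×ˢ closure U from ⟨hs, ht⟩)

theorem norm_image_sub_le_of_norm_hasDerivAt_le_of_ne {c : ℝ} (hf : Continuous f)
    (hd : ∀ t ≠ c, HasDerivAt f (f' t) t) (hb : ∀ t ≠ c, ‖f' t‖ ≤ C) (s t : ℝ) :
    ‖f t - f s‖ ≤ C * |t - s| := by
  wlog hst : s ≤ t generalizing s t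
  · rw [norm_sub_rev, abs_sub_comm]
    exact this t s (le_of_not_ge hst)
  have left {s t : ℝ} (hs : s ≤ c) (ht : t ≤ c) : ‖f t - f s‖ ≤ C * |t - s| := by
    refine (convex_Iio c).norm_image_sub_le_of_norm_hasDerivAt_le_closure hf
      (fun t ht => hd t ht.ne) (fun t ht => hb t ht.ne) ?_ ?_ <;> rwa [closure_Iio]
  have right {s t : ℝ} (hs : c ≤ s) (ht : c ≤ t) : ‖f t - f s‖ ≤ C * |t - s| := by
    refine (convex_Ioi c).norm_image_sub_le_of_norm_hasDerivAt_le_closure hf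
      (fun t ht => hd t ht.ne') (fun t ht => hb t ht.ne') ?_ ?_ <;> rwa [closure_Ioi]
  rcases le_total t c with htc | hct
  · exact left (hst.trans htc) htc
  rcases le_total c s with hcs | hsc
  · exact right hcs hct
  calc ‖f t - f s‖ ≤ ‖f t - f c‖ + ‖f c - f s‖ := norm_sub_le_norm_sub_add_norm_sub _ _ _
    _ ≤ C * |t - c| + C * |c - s| := add_le_add (right le_rfl hct) (left hsc le_rfl)
    _ = C * |t - s| := by
      rw [abs_of_nonneg (sub_nonneg.2 hct), abs_of_nonneg (sub_nonneg.2 hsc),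
        abs_of_nonneg (sub_nonneg.2 hst)]
      ring

theorem norm_image_sub_sub_le_of_norm_deriv_sub_le {g : ℝ → F} {K a b : ℝ}
    (hf : ∀ t, HasDerivAt f (g t) t) (hg : ∀ t ∈ Ico a b, ‖g t - g a‖ ≤ K * (t - a))
    (hab : a ≤ b) : ‖f b - f a - (b - a) • g a‖ ≤ K / 2 * (b - a) ^ 2 := by
  have hderiv (t : ℝ) : HasDerivAt (fun s => f s - f a - (s - a) • g a) (g t - g a) t := by
    simpa using ((hf t).sub_const (f a)).fun_sub (((hasDerivAt_id' t).sub_const a).smul_const (g a))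
  have hB (t : ℝ) : HasDerivAt (fun s => K / 2 * (s - a) ^ 2) (K * (t - a)) t := by
    refine ((((hasDerivAt_id' t).sub_const a).fun_pow 2).const_mul (K / 2)).congr_deriv ?_
    push_cast
    ring
  exact image_norm_le_of_norm_deriv_right_le_deriv_boundary
    (fun t _ => (hderiv t).continuousAt.continuousWithinAt)
    (fun t _ => (hderiv t).hasDerivWithinAt) (by simp) hB hg (right_mem_Icc.2 hab)

end RealLine

section InnerProductSpace

variable {E : Type*} [NormedAddCommGroup E] [InnerProductSpace ℝ E] {ν : ℝ → ℝ}

theorem hasFDerivAt_norm_of_ne_zero {x : E} (hx : x ≠ 0) :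
    HasFDerivAt (‖·‖) (‖x‖⁻¹ • innerSL ℝ x) x := by
  have hx' : ‖x‖ ≠ 0 := norm_ne_zero_iff.2 hx
  have h := (hasStrictFDerivAt_norm_sq x).hasFDerivAt.sqrt (pow_ne_zero 2 hx')
  simp only [Real.sqrt_sq (norm_nonneg _)] at h
  refine h.congr_fderiv ?_
  ext ψ
  simp only [FunLike.coe_smul, Pi.smul_apply, innerSL_apply_apply, smul_eq_mul]
  field_simp
  ring

/-- At `x = 0` the junk value `0 / 0 = 0` leaves `ν 0 • id`, which is the derivative of
`T` there. -/
def radialFDeriv (ν : ℝ → ℝ) (x : E) : E →L[ℝ] E :=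
  ν ‖x‖ • ContinuousLinearMap.id ℝ E + (deriv ν ‖x‖ / ‖x‖) • (innerSL ℝ x).smulRight x

theorem radialFDeriv_apply (x ψ : E) :
    radialFDeriv ν x ψ = ν ‖x‖ • ψ + (deriv ν ‖x‖ / ‖x‖ * ⟪x, ψ⟫) • x := by
  simp [radialFDeriv, smul_smul]

theorem hasFDerivAt_radial (hν : Differentiable ℝ ν) (x : E) :
    HasFDerivAt (fun W : E => ν ‖W‖ • W) (radialFDeriv ν x) x := by
  rcases eq_or_ne x 0 with rfl | hx
  · have h0 : radialFDeriv ν (0 : E) = ν 0 • ContinuousLinearMap.id ℝ E := by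
      ext ψ; simp [radialFDeriv_apply]
    rw [h0, hasFDerivAt_iff_isLittleO_nhds_zero]
    have hlim : Tendsto (fun h : E => ν ‖h‖ - ν 0) (𝓝 0) (𝓝 0) := by
      simpa using ((hν.continuous.comp continuous_norm).tendsto (0 : E)).sub_const (ν 0)
    simpa [sub_smul] using (isLittleO_one_iff ℝ).2 hlim |>.smul_isBigO (isBigO_refl id (𝓝 0))
  · have h := ((hν ‖x‖).hasDerivAt.comp_hasFDerivAt x (hasFDerivAt_norm_of_ne_zero hx)).smul
      (hasFDerivAt_id x)
    refine h.congr_fderiv ?_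
    ext ψ
    simp [radialFDeriv_apply, div_eq_mul_inv, mul_comm, mul_left_comm]

theorem norm_radialFDeriv_apply_sub_le (x ψ : E) :
    ‖radialFDeriv ν x ψ - ν ‖x‖ • ψ‖ ≤ |deriv ν ‖x‖| * ‖x‖ * ‖ψ‖ := by
  rw [radialFDeriv_apply, add_sub_cancel_left, norm_smul, Real.norm_eq_abs, abs_mul, abs_div,
    abs_norm]
  rcases eq_or_ne x 0 with rfl | hx
  · simp
  have hx' : 0 < ‖x‖ := norm_pos_iff.2 hx
  calc |deriv ν ‖x‖| / ‖x‖ * |⟪x, ψ⟫| * ‖x‖ = |deriv ν ‖x‖| * |⟪x, ψ⟫| := by field_simp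
    _ ≤ |deriv ν ‖x‖| * (‖x‖ * ‖ψ‖) := by gcongr; exact abs_real_inner_le_norm x ψ
    _ = |deriv ν ‖x‖| * ‖x‖ * ‖ψ‖ := by ring

theorem continuous_radialFDeriv_apply (hν : ContDiff ℝ 1 ν) (ψ : E) :
    Continuous fun x : E => radialFDeriv ν x ψ := by
  have hν' : Continuous (deriv ν) := hν.continuous_deriv_one
  have hν0 : Continuous ν := hν.continuous
  rw [continuous_iff_continuousAt]
  intro x
  rcases eq_or_ne x 0 with rfl | hx
  · rw [ContinuousAt, tendsto_iff_norm_sub_tendsto_zero]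
    have hlim : Tendsto (fun y : E => |deriv ν ‖y‖| * ‖y‖ * ‖ψ‖ + |ν ‖y‖ - ν 0| * ‖ψ‖)
        (𝓝 0) (𝓝 0) := by
      have : Continuous fun y : E => |deriv ν ‖y‖| * ‖y‖ * ‖ψ‖ + |ν ‖y‖ - ν 0| * ‖ψ‖ := by
        fun_prop
      simpa using this.tendsto 0
    refine squeeze_zero (fun _ => norm_nonneg _) (fun y => ?_) hlim
    have hsplit : radialFDeriv ν y ψ - radialFDeriv ν 0 ψ
        = (radialFDeriv ν y ψ - ν ‖y‖ • ψ) + (ν ‖y‖ - ν 0) • ψ := by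
      rw [radialFDeriv_apply 0]; simp [sub_smul]
    rw [hsplit]
    refine (norm_add_le _ _).trans (add_le_add (norm_radialFDeriv_apply_sub_le y ψ) ?_)
    rw [norm_smul, Real.norm_eq_abs]
  · have hx' : ‖x‖ ≠ 0 := norm_ne_zero_iff.2 hx
    simp only [radialFDeriv_apply]
    fun_prop (disch := exact hx')

/-- `D²T(x)[ψ, ψ]` for `x ≠ 0`, written with the unit vector `x / |x|`. -/
def radialSecondDeriv (ν : ℝ → ℝ) (x ψ : E) : E :=
  (2 * deriv ν ‖x‖ * ⟪‖x‖⁻¹ • x, ψ⟫) • ψ +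
    ((deriv (deriv ν) ‖x‖ * ‖x‖ - deriv ν ‖x‖) * ⟪‖x‖⁻¹ • x, ψ⟫ ^ 2 +
      deriv ν ‖x‖ * ‖ψ‖ ^ 2) • (‖x‖⁻¹ • x)

theorem norm_radialSecondDeriv_le {x : E} (hx : x ≠ 0) (ψ : E) :
    ‖radialSecondDeriv ν x ψ‖ ≤
      (4 * |deriv ν ‖x‖| + |deriv (deriv ν) ‖x‖| * ‖x‖) * ‖ψ‖ ^ 2 := by
  have he : ‖‖x‖⁻¹ • x‖ = 1 := norm_smul_inv_norm hx
  have hw : |⟪‖x‖⁻¹ • x, ψ⟫| ≤ ‖ψ‖ := by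
    simpa [he] using abs_real_inner_le_norm (‖x‖⁻¹ • x) ψ
  have hw2 : ⟪‖x‖⁻¹ • x, ψ⟫ ^ 2 ≤ ‖ψ‖ ^ 2 := sq_le_sq' (abs_le.1 hw).1 (abs_le.1 hw).2
  unfold radialSecondDeriv
  generalize ⟪‖x‖⁻¹ • x, ψ⟫ = w at hw hw2
  generalize deriv ν ‖x‖ = a
  generalize deriv (deriv ν) ‖x‖ = b
  have hr := norm_nonneg x
  have hm := norm_nonneg ψ
  have h1 : |2 * a * w| * ‖ψ‖ ≤ 2 * |a| * ‖ψ‖ ^ 2 := by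
    rw [abs_mul, abs_mul, abs_two]
    have := mul_le_mul_of_nonneg_left hw (mul_nonneg zero_le_two (abs_nonneg a))
    nlinarith
  have h2 : |(b * ‖x‖ - a) * w ^ 2 + a * ‖ψ‖ ^ 2| ≤ (|b| * ‖x‖ + 2 * |a|) * ‖ψ‖ ^ 2 := by
    calc |(b * ‖x‖ - a) * w ^ 2 + a * ‖ψ‖ ^ 2|
        ≤ (|b| * ‖x‖ + |a|) * w ^ 2 + |a| * ‖ψ‖ ^ 2 := by
          refine (abs_add_le _ _).trans (add_le_add ?_ (by rw [abs_mul, abs_pow, abs_norm]))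
          rw [abs_mul, abs_pow, sq_abs]
          gcongr
          exact (abs_sub _ _).trans (by rw [abs_mul, abs_norm])
      _ ≤ (|b| * ‖x‖ + |a|) * ‖ψ‖ ^ 2 + |a| * ‖ψ‖ ^ 2 := by gcongr
      _ = (|b| * ‖x‖ + 2 * |a|) * ‖ψ‖ ^ 2 := by ring
  calc _ ≤ |2 * a * w| * ‖ψ‖ + |(b * ‖x‖ - a) * w ^ 2 + a * ‖ψ‖ ^ 2| * 1 := by
        refine (norm_add_le _ _).trans_eq ?_
        rw [norm_smul, norm_smul, he, Real.norm_eq_abs, Real.norm_eq_abs]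
    _ ≤ _ := by nlinarith

theorem hasDerivAt_radialFDeriv_apply_line (hν : ContDiff ℝ 2 ν) {φ ψ : E} {t : ℝ}
    (hx : φ + t • ψ ≠ 0) :
    HasDerivAt (fun s => radialFDeriv ν (φ + s • ψ) ψ) (radialSecondDeriv ν (φ + t • ψ) ψ) t := by
  set x := φ + t • ψ with hxdef
  have hr0 : ‖x‖ ≠ 0 := norm_ne_zero_iff.2 hx
  have hline := hasDerivAt_add_smul φ ψ t
  have hr : HasDerivAt (fun s => ‖φ + s • ψ‖) (‖x‖⁻¹ * ⟪x, ψ⟫) t := by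
    have := (hasFDerivAt_norm_of_ne_zero hx).comp_hasDerivAt t hline
    simp only [FunLike.coe_smul, Pi.smul_apply, innerSL_apply_apply, smul_eq_mul] at this
    exact this
  have hν1 := (hν.differentiable two_ne_zero ‖x‖).hasDerivAt.comp t hr
  have hν2 := (hν.differentiable_deriv_two ‖x‖).hasDerivAt.comp t hr
  have hinner : HasDerivAt (fun s => ⟪φ + s • ψ, ψ⟫) ⟪ψ, ψ⟫ t := by
    simpa using hline.inner ℝ (hasDerivAt_const t ψ)
  simp only [radialFDeriv_apply]
  refine ((hν1.smul_const ψ).add (((hν2.div hr hr0).mul hinner).smul hline)).congr_deriv ?_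
  simp only [Function.comp_apply, Pi.div_apply, Pi.mul_apply, ← hxdef]
  rw [radialSecondDeriv, real_inner_smul_left, real_inner_self_eq_norm_sq]
  match_scalars
  · field_simp
    ring
  · field_simp

theorem exists_forall_ne_add_smul_ne_zero (φ : E) {ψ : E} (hψ : ψ ≠ 0) :
    ∃ c : ℝ, ∀ t ≠ c, φ + t • ψ ≠ 0 := by
  by_cases h : ∃ c : ℝ, φ + c • ψ = 0
  · obtain ⟨c, hc⟩ := h
    refine ⟨c, fun t ht h0 => ?_⟩
    have : (t - c) • ψ = 0 := by rw [sub_smul, ← add_sub_add_left_eq_sub _ _ φ, h0, hc, sub_zero]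
    exact ht (sub_eq_zero.1 ((smul_eq_zero.1 this).resolve_right hψ))
  · exact ⟨0, fun t _ h0 => h ⟨t, h0⟩⟩

end InnerProductSpace

theorem hasFDerivAt_Tmap {ν : ℝ → ℝ} (hν : Differentiable ℝ ν) (x : EuclideanSpace ℝ (Fin 2)) :
    HasFDerivAt (Tmap ν) (radialFDeriv ν x) x :=
  hasFDerivAt_radial hν x

theorem S_quadratic_growth_general (ν : ℝ → ℝ) (c₇ : ℝ)
    (hC3 : ContDiff ℝ 3 ν)
    (h7 : ∀ s ≥ (0:ℝ), 4 * |deriv ν s| + |deriv (deriv ν) s| * s ≤ c₇) :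
    ∀ φ ψ : EuclideanSpace ℝ (Fin 2), ‖Smap ν φ ψ‖ ≤ c₇ * ‖ψ‖ ^ 2 := by
  intro φ ψ
  have hν : ContDiff ℝ 2 ν := hC3.of_le (by norm_num)
  have hc₇ : 0 ≤ c₇ := le_trans (by positivity) (h7 0 le_rfl)
  rcases eq_or_ne ψ 0 with rfl | hψ
  · simp [Smap]
  obtain ⟨c, hc⟩ := exists_forall_ne_add_smul_ne_zero φ hψ
  set G := fun t : ℝ => radialFDeriv ν (φ + t • ψ) ψ
  have hG : ∀ s t, ‖G t - G s‖ ≤ c₇ * ‖ψ‖ ^ 2 * |t - s| :=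
    norm_image_sub_le_of_norm_hasDerivAt_le_of_ne
      ((continuous_radialFDeriv_apply (hν.of_le one_le_two) ψ).comp (by fun_prop))
      (fun t ht => hasDerivAt_radialFDeriv_apply_line hν (hc t ht))
      (fun t ht => (norm_radialSecondDeriv_le (hc t ht) ψ).trans
        (by gcongr; exact h7 _ (norm_nonneg _)))
  have hT := hasFDerivAt_Tmap (hν.differentiable two_ne_zero)
  have hTline : ∀ t, HasDerivAt (fun s : ℝ => Tmap ν (φ + s • ψ)) (G t) t := fun t =>
    (hT _).comp_hasDerivAt t (hasDerivAt_add_smul φ ψ t)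
  have hTaylor := norm_image_sub_sub_le_of_norm_deriv_sub_le hTline
    (fun t ht => by simpa [abs_of_nonneg ht.1] using hG 0 t) zero_le_one
  rw [Smap, (hT φ).fderiv]
  simp only [one_smul, zero_smul, add_zero, sub_zero, one_pow, mul_one, G] at hTaylor
  have := mul_nonneg hc₇ (sq_nonneg ‖ψ‖)
  linarith

/-- quadratic growth bound `|S_φ(ψ)| ≤ c₇|ψ|²`. -/
theorem S_quadratic_growth (ν : ℝ → ℝ) (ctil c₇ : ℝ)
    (hC3 : ContDiff ℝ 3 ν)
    (hb : ∀ s > (0:ℝ), |deriv ν s| / s ≤ ctil)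
    (h7 : ∀ s ≥ (0:ℝ), 4 * |deriv ν s| + |deriv (deriv ν) s| * s ≤ c₇) :
    ∀ φ ψ : EuclideanSpace ℝ (Fin 2), ‖Smap ν φ ψ‖ ≤ c₇ * ‖ψ‖ ^ 2 :=
  S_quadratic_growth_general ν c₇ hC3 h7

end
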